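/- arXiv:2203.00090 — 7 statements merged into one kernel-verified Lean document; each statement's English description precedes it below -/
import Mathlib

section
/- Let a > 0 be real and let j ≥ 1 be an odd integer. Then the sum of the absolute values of the numbers 2√a·cos(hπ/(j+1)) for h = 1, …, j equals 2√a·(cot(π/(2j+2)) - 1). -/
/-!
Write `j = 2m + 1` and `θ_h = hπ/(2m+2)`. Since `cos (π - θ) = -cos θ` and `θ_{m+1} = π/2`, the
sum of `|cos θ_h|` is twice `∑_{h ≤ m} cos θ_h`. With `x = π/(4m+4)` we have `θ_h = 2hx`, and
`2 sin x cos (2hx) = sin ((2h+1)x) - sin ((2h-1)x)` telescopes the latter sum to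
`(sin ((2m+1)x) - sin x) / (2 sin x) = (cos x - sin x) / (2 sin x)`.
-/

open Real Finset

lemma sum_Icc_one_two_mul_add_one {M : Type*} [AddCommMonoid M] (f : ℕ → M) (m : ℕ) :
    ∑ h ∈ Icc 1 (2 * m + 1), f h = f (m + 1) + ∑ k ∈ range m, (f (k + 1) + f (2 * m + 1 - k)) := by
  have : Icc 1 (2 * m + 1) = Ico 1 (2 * m + 2) := by ext; simp; omega
  rw [this, sum_Ico_eq_sum_range, show 2 * m + 2 - 1 = m + (1 + m) by omega, sum_range_add,
    sum_range_add, sum_range_one, sum_add_distrib, ← sum_range_reflect (fun k => f (2 * m + 1 - k)) m,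
    add_left_comm]
  congr 2
  · rw [add_zero, add_comm]
  · exact sum_congr rfl fun k _ => by rw [add_comm]
  · exact sum_congr rfl fun k hk => by rw [mem_range] at hk; congr 1; omega

lemma two_mul_sin_mul_sum_range_cos (x : ℝ) (n : ℕ) :
    2 * sin x * ∑ k ∈ range n, cos (2 * (k + 1) * x) = sin ((2 * n + 1) * x) - sin x := by
  induction n with
  | zero => simp
  | succ n ih =>
    rw [sum_range_succ, mul_add, ih, two_mul_sin_mul_cos]
    push_cast
    rw [show x - 2 * (n + 1) * x = -((2 * n + 1) * x) by ring, sin_neg]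
    ring_nf

lemma sum_Icc_abs_cos_mul_pi_div (m : ℕ) :
    ∑ h ∈ Icc 1 (2 * m + 1), |cos (h * π / (2 * m + 2))|
      = 2 * ∑ k ∈ range m, cos ((k + 1) * π / (2 * m + 2)) := by
  have hm : (0 : ℝ) < 2 * m + 2 := by positivity
  rw [sum_Icc_one_two_mul_add_one, mul_sum]
  have middle : cos (((m + 1 : ℕ) : ℝ) * π / (2 * m + 2)) = 0 := by
    rw [← cos_pi_div_two]; congr 1; field_simp; push_cast; ring
  rw [middle, abs_zero, zero_add]
  refine sum_congr rfl fun k hk => ?_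
  rw [mem_range] at hk
  have reflect : ((2 * m + 1 - k : ℕ) : ℝ) * π / (2 * m + 2) = π - (k + 1) * π / (2 * m + 2) := by
    rw [Nat.cast_sub (by omega)]; field_simp; push_cast; ring
  have nonneg : 0 ≤ cos ((k + 1) * π / (2 * m + 2)) := by
    refine cos_nonneg_of_mem_Icc ⟨?_, ?_⟩
    · linarith [pi_pos, show 0 ≤ (k + 1) * π / (2 * m + 2) by positivity]
    · rw [div_le_iff₀ hm]
      have : (k : ℝ) + 1 ≤ m := by exact_mod_cast hk
      nlinarith [pi_pos]
  rw [reflect, cos_pi_sub, abs_neg, Nat.cast_add_one, abs_of_nonneg nonneg]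
  ring

lemma two_mul_sum_range_cos_eq_cot_sub_one (m : ℕ) :
    2 * ∑ k ∈ range m, cos ((k + 1) * π / (2 * m + 2)) = cot (π / (4 * m + 4)) - 1 := by
  have hm : (0 : ℝ) < 4 * m + 4 := by positivity
  have hsin : 0 < sin (π / (4 * m + 4)) := sin_pos_of_pos_of_lt_pi (by positivity) (by
    rw [div_lt_iff₀ hm]; nlinarith [pi_pos, (m.cast_nonneg : (0 : ℝ) ≤ m)])
  have telescope := two_mul_sin_mul_sum_range_cos (π / (4 * m + 4)) m
  rw [show (2 * m + 1) * (π / (4 * m + 4)) = π / 2 - π / (4 * m + 4) by field_simp; ring,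
    sin_pi_div_two_sub] at telescope
  have angle : ∀ k : ℕ, ((k : ℝ) + 1) * π / (2 * m + 2) = 2 * (k + 1) * (π / (4 * m + 4)) :=
    fun k => by field_simp; ring
  simp only [angle]
  rw [cot_eq_cos_div_sin, eq_sub_iff_add_eq, eq_div_iff hsin.ne']
  linear_combination telescope

theorem stmt_1_general (a : ℝ) (j : ℕ) (hodd : Odd j) :
    ∑ h ∈ Finset.Icc 1 j, |2 * Real.sqrt a * Real.cos (h * Real.pi / (j + 1))|
      = 2 * Real.sqrt a * (Real.cot (Real.pi / (2 * j + 2)) - 1) := by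
  obtain ⟨m, rfl⟩ := hodd
  simp only [abs_mul, abs_two, abs_of_nonneg (sqrt_nonneg a), ← mul_sum]
  push_cast
  rw [show (2 * m + 1 : ℝ) + 1 = 2 * m + 2 by ring, show 2 * (2 * m + 1 : ℝ) + 2 = 4 * m + 4 by ring,
    sum_Icc_abs_cos_mul_pi_div, two_mul_sum_range_cos_eq_cot_sub_one]

theorem stmt_1 (a : ℝ) (ha : 0 < a) (j : ℕ) (hj : 1 ≤ j) (hodd : Odd j) :
    ∑ h ∈ Finset.Icc 1 j, |2 * Real.sqrt a * Real.cos (h * Real.pi / (j + 1))|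
      = 2 * Real.sqrt a * (Real.cot (Real.pi / (2 * j + 2)) - 1) :=
  stmt_1_general a j hodd
end

section
/- Let a > 0 be real and let j ≥ 2 be an even integer. Then the sum of the absolute values of the numbers 2√a·cos(hπ/(j+1)) for h = 1, …, j equals 2√a·(csc(π/(2j+2)) - 1). -/
/-!
The reflection `h ↦ j + 1 - h` turns `cos (hπ/(j+1))` into its negative, so the sum of absolute
values is twice the sum over `1 ≤ h ≤ j/2`, where every cosine is nonnegative. With
`x = π/(2j+2)` that half sum telescopes: `2 sin x · ∑ cos (2hx) = sin ((j+1)x) - sin x = 1 - sin x`.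
-/

open Real Finset

theorem two_mul_sin_mul_sum_cos (x : ℝ) (m : ℕ) :
    2 * sin x * ∑ h ∈ Icc 1 m, cos (2 * h * x) = sin ((2 * m + 1) * x) - sin x := by
  induction m with
  | zero => simp
  | succ m ih =>
    have hstep : sin ((2 * (m + 1 : ℕ) + 1) * x) - sin ((2 * m + 1) * x)
        = 2 * sin x * cos (2 * (m + 1 : ℕ) * x) := by
      rw [sin_sub_sin]; push_cast; ring_nf
    rw [sum_Icc_succ_top (by omega), mul_add, ih]
    linarith

theorem sum_Icc_two_mul_eq_two_nsmul_of_reflect {M : Type*} [AddCommMonoid M] (f : ℕ → M) (m : ℕ)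
    (hf : ∀ h ∈ Icc 1 m, f (2 * m + 1 - h) = f h) :
    ∑ h ∈ Icc 1 (2 * m), f h = 2 • ∑ h ∈ Icc 1 m, f h := by
  have hIoc : ∀ n, Icc 1 n = Ioc 0 n := fun n => by ext; simp; omega
  rw [hIoc, ← sum_Ioc_consecutive _ (Nat.zero_le m) (by omega : m ≤ 2 * m), two_nsmul, hIoc]
  congr 1
  refine sum_nbij' (fun h => 2 * m + 1 - h) (fun h => 2 * m + 1 - h) ?_ ?_ ?_ ?_ ?_ <;>
    intro h hh <;> simp only [mem_Ioc] at hh ⊢ <;> try omega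
  rw [← hf (2 * m + 1 - h) (by simp; omega), Nat.sub_sub_self (by omega)]

theorem sum_abs_cos_mul_pi_div_of_even {n : ℕ} (hn : Even n) :
    ∑ h ∈ Icc 1 n, |cos (h * π / (n + 1))| = (sin (π / (2 * n + 2)))⁻¹ - 1 := by
  obtain ⟨m, rfl⟩ := hn
  rw [← two_mul]
  set x := π / (2 * ((2 * m : ℕ) : ℝ) + 2)
  have hcos : ∀ h : ℕ, h * π / ((2 * m : ℕ) + 1) = 2 * h * x := fun h => by
    simp only [x]; field_simp
  have hx : 0 < x := by positivity
  have hmx : (2 * m + 1) * x = π / 2 := by simp only [x]; push_cast; field_simp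
  simp_rw [hcos]
  rw [sum_Icc_two_mul_eq_two_nsmul_of_reflect]
  · have hhalf : ∀ h ∈ Icc 1 m, |cos (2 * h * x)| = cos (2 * h * x) := fun h hh => by
      have hhm : (h : ℝ) ≤ m := by exact_mod_cast (mem_Icc.mp hh).2
      exact abs_of_nonneg (cos_nonneg_of_mem_Icc ⟨by nlinarith [pi_pos], by nlinarith⟩)
    have hsin : 0 < sin x := sin_pos_of_pos_of_lt_pi hx (by nlinarith [pi_pos])
    have hsum := two_mul_sin_mul_sum_cos x m
    rw [hmx, sin_pi_div_two] at hsum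
    rw [sum_congr rfl hhalf, two_nsmul]
    generalize ∑ h ∈ Icc 1 m, cos (2 * h * x) = S at hsum ⊢
    field_simp
    linarith
  · intro h hh
    have hrefl : 2 * (((2 * m + 1 - h : ℕ) : ℝ)) * x = π - 2 * h * x := by
      rw [Nat.cast_sub (by simp at hh; omega)]; push_cast; linarith
    rw [hrefl, cos_pi_sub, abs_neg]

theorem stmt_2_general (a : ℝ) (j : ℕ) (heven : Even j) :
    ∑ h ∈ Finset.Icc 1 j, |2 * Real.sqrt a * Real.cos (h * Real.pi / (j + 1))|
      = 2 * Real.sqrt a * ((Real.sin (Real.pi / (2 * j + 2)))⁻¹ - 1) := by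
  simp_rw [abs_mul, abs_two, abs_of_nonneg (sqrt_nonneg a), ← mul_sum,
    sum_abs_cos_mul_pi_div_of_even heven]

theorem stmt_2 (a : ℝ) (ha : 0 < a) (j : ℕ) (hj : 2 ≤ j) (heven : Even j) :
    ∑ h ∈ Finset.Icc 1 j, |2 * Real.sqrt a * Real.cos (h * Real.pi / (j + 1))|
      = 2 * Real.sqrt a * ((Real.sin (Real.pi / (2 * j + 2)))⁻¹ - 1) :=
  stmt_2_general a j heven
end

section
/- For every integer j ≥ 1, the sum ∑_{h=1}^{⌊j/2⌋} cos(hπ/(j+1)) equals (1/2)·(cot(π/(2j+2)) - 1) if j is odd, and (1/2)·(csc(π/(2j+2)) - 1) if j is even. -/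
/-! Since `2 sin(θ/2) cos(hθ) = sin((h + 1/2)θ) - sin((h - 1/2)θ)`, the sum of `cos(hθ)` over
`1 ≤ h ≤ m` telescopes to `(sin((m + 1/2)θ) / sin(θ/2) - 1) / 2`. With `θ = π/(j+1)` and
`m = ⌊j/2⌋`, the angle `(m + 1/2)θ` is `π/2` for even `j` and `π/2 - θ/2` for odd `j`. -/

open Real Finset

lemma two_mul_sin_half_mul_sum_Icc_cos (θ : ℝ) (m : ℕ) :
    2 * sin (θ / 2) * ∑ h ∈ Icc 1 m, cos (h * θ) = sin ((m + 1 / 2) * θ) - sin (θ / 2) := by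
  induction m with
  | zero => simp [div_eq_inv_mul]
  | succ m ih =>
    rw [sum_Icc_succ_top (by omega), mul_add, ih, two_mul_sin_mul_cos,
      show θ / 2 - ((m + 1 : ℕ) : ℝ) * θ = -((m + 1 / 2) * θ) by push_cast; ring, sin_neg,
      show θ / 2 + ((m + 1 : ℕ) : ℝ) * θ = ((m + 1 : ℕ) + 1 / 2) * θ by push_cast; ring]
    ring

lemma sum_Icc_cos_mul (θ : ℝ) (m : ℕ) (hθ : sin (θ / 2) ≠ 0) :
    ∑ h ∈ Icc 1 m, cos (h * θ) = 1 / 2 * (sin ((m + 1 / 2) * θ) / sin (θ / 2) - 1) := by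
  have h := two_mul_sin_half_mul_sum_Icc_cos θ m
  generalize ∑ h ∈ Icc 1 m, cos (h * θ) = S at h ⊢
  rw [sub_eq_iff_eq_add.mp h.symm]
  field_simp
  ring

theorem stmt_3_general (j : ℕ) :
    ∑ h ∈ Finset.Icc 1 (j / 2), Real.cos (h * Real.pi / (j + 1))
      = if Odd j then (1 / 2) * (Real.cot (Real.pi / (2 * j + 2)) - 1)
        else (1 / 2) * ((Real.sin (Real.pi / (2 * j + 2)))⁻¹ - 1) := by
  have hhalf : π / (j + 1) / 2 = π / (2 * j + 2) := by
    rw [div_div]; ring_nf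
  have hsin : sin (π / (2 * j + 2)) ≠ 0 := by
    refine (sin_pos_of_pos_of_lt_pi (by positivity) ?_).ne'
    exact div_lt_self pi_pos (by linarith [(j.cast_nonneg : (0 : ℝ) ≤ j)])
  simp_rw [mul_div_assoc]
  rw [sum_Icc_cos_mul _ _ (hhalf ▸ hsin), hhalf]
  obtain ⟨m, rfl | rfl⟩ := Nat.even_or_odd' j
  · have harg : (↑(2 * m / 2) + 1 / 2) * (π / (↑(2 * m) + 1)) = π / 2 := by
      rw [Nat.mul_div_cancel_left m two_pos]
      push_cast
      field_simp
    rw [if_neg (Nat.not_odd_iff_even.mpr (even_two_mul m)), harg, sin_pi_div_two, one_div (sin _)]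
  · have harg : (↑((2 * m + 1) / 2) + 1 / 2) * (π / (↑(2 * m + 1) + 1))
        = π / 2 - π / (2 * ↑(2 * m + 1) + 2) := by
      rw [show (2 * m + 1) / 2 = m by omega]
      push_cast
      field_simp
      ring
    rw [if_pos (odd_two_mul_add_one m), harg, sin_pi_div_two_sub, cot_eq_cos_div_sin]

theorem stmt_3 (j : ℕ) (hj : 1 ≤ j) :
    ∑ h ∈ Finset.Icc 1 (j / 2), Real.cos (h * Real.pi / (j + 1))
      = if Odd j then (1 / 2) * (Real.cot (Real.pi / (2 * j + 2)) - 1)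
        else (1 / 2) * ((Real.sin (Real.pi / (2 * j + 2)))⁻¹ - 1) :=
  stmt_3_general j
end

section
/- Let T be a rooted tree and assign to each vertex v a rational function G(v,x) over ℤ by the recursion G(v,x) = x - ∑_{w child of v} 1/G(w,x) (so leaves get G(v,x) = x). Then the characteristic polynomial of the adjacency matrix of T equals the product over all vertices v of G(v,x). -/
/-!
Eliminating the tree from the leaves up is an `LDLᵀ` factorisation: with `E` the 0/1 matrix of
child-to-parent edges, so that `A = E + Eᵀ`, and `L = 1 - diag(1/G) E`, which is unit lower
triangular because parents have smaller labels, one has `x - A = Lᵀ diag(G) L` as soon as every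
`G v` is nonzero; the correction term `Eᵀ diag(1/G) E` is the diagonal matrix of the sums
`∑_{w child of v} 1/G w`, which is exactly what the recursion subtracts. Taking determinants gives
`∏ G v`. Nonvanishing comes from the valuation at infinity: inductively `G v` has the valuation of
`X`, since the subtracted sum has valuation at most that of `1/X`.
-/

open Polynomial

/-- A rooted tree on the vertex set `Fin (n+1)`, encoded by a parent function:
the root is `0`, and every non-root vertex has a parent strictly smaller than
itself (which guarantees acyclicity and connectedness). -/
structure ParentTree (n : ℕ) where
  parent : Fin (n + 1) → Fin (n + 1)
  parent_lt : ∀ i : Fin (n + 1), i ≠ 0 → parent i < i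
  parent_zero : parent 0 = 0

namespace ParentTree

variable {n : ℕ}

/-- The set of children of a vertex. -/
def children (T : ParentTree n) (v : Fin (n + 1)) : Finset (Fin (n + 1)) :=
  Finset.univ.filter fun w => T.parent w = v ∧ w ≠ v

/-- The adjacency matrix of a rooted tree, with entries in `R`. -/
def adjMat (T : ParentTree n) (R : Type) [Zero R] [One R] :
    Matrix (Fin (n + 1)) (Fin (n + 1)) R :=
  Matrix.of fun i j => if i ≠ j ∧ (T.parent i = j ∨ T.parent j = i) then 1 else 0

/-- The degree of a vertex. -/
def deg (T : ParentTree n) (v : Fin (n + 1)) : ℕ :=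
  (T.children v).card + if v = 0 then 0 else 1

end ParentTree

open Matrix

namespace Matrix

variable {m R S : Type*} [Fintype m] [DecidableEq m] [CommRing R] [CommRing S]

theorem ringHom_charpoly (M : Matrix m m R) (f : R[X] →+* S) :
    f M.charpoly = (scalar m (f X) - M.map (f.comp C)).det := by
  rw [charpoly, RingHom.map_det, charmatrix]
  congr
  ext i j
  obtain rfl | hij := eq_or_ne i j <;> simp [*]

end Matrix

namespace ParentTree

variable {n : ℕ} (T : ParentTree n)

theorem parent_le (i : Fin (n + 1)) : T.parent i ≤ i := by
  rcases eq_or_ne i 0 with rfl | hi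
  · rw [T.parent_zero]
  · exact (T.parent_lt i hi).le

theorem parent_lt_of_ne {i : Fin (n + 1)} (h : T.parent i ≠ i) : T.parent i < i :=
  (T.parent_le i).lt_of_ne h

theorem lt_of_mem_children {v w : Fin (n + 1)} (h : w ∈ T.children v) : v < w := by
  simp only [children, Finset.mem_filter, Finset.mem_univ, true_and] at h
  obtain ⟨rfl, hw⟩ := h
  exact T.parent_lt_of_ne (Ne.symm hw)

theorem valuation_eq_of_one_lt {K Γ₀ : Type*} [Field K] [LinearOrderedCommGroupWithZero Γ₀]
    (v : Valuation K Γ₀) {x : K} (hx : 1 < v x) (G : Fin (n + 1) → K)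
    (hG : ∀ u, G u = x - ∑ w ∈ T.children u, (G w)⁻¹) (u : Fin (n + 1)) :
    v (G u) = v x := by
  induction u using WellFoundedGT.induction with
  | _ u ih =>
  have hsum : v (∑ w ∈ T.children u, (G w)⁻¹) < v x := by
    refine (v.map_sum_le fun w hw => ?_).trans_lt ((inv_lt_one_of_one_lt₀ hx).trans hx)
    rw [map_inv₀, ih w (T.lt_of_mem_children hw)]
  rw [hG u, v.map_sub_eq_of_lt_left hsum]

def parentMat (R : Type*) [Zero R] [One R] : Matrix (Fin (n + 1)) (Fin (n + 1)) R :=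
  Matrix.of fun i j => if T.parent i = j ∧ i ≠ j then 1 else 0

theorem adjMat_map {R S : Type} [NonAssocSemiring R] [NonAssocSemiring S] (f : R →+* S) :
    (T.adjMat R).map f = T.adjMat S := by
  ext i j
  simp only [adjMat, map_apply, of_apply]
  split_ifs <;> simp

theorem adjMat_eq_parentMat_add_transpose (R : Type) [AddMonoidWithOne R] :
    T.adjMat R = T.parentMat R + (T.parentMat R)ᵀ := by
  ext i j
  simp only [adjMat, parentMat, Matrix.add_apply, transpose_apply, of_apply]
  by_cases hij : i = j
  · simp [hij]
  by_cases hi : T.parent i = j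
  · have hji : j < i := hi ▸ T.parent_lt_of_ne (hi.trans_ne (Ne.symm hij))
    have : T.parent j ≠ i := ((T.parent_le j).trans_lt hji).ne
    simp [hij, hi, this]
  · by_cases hj : T.parent j = i <;> simp [hij, hi, hj, Ne.symm hij]

theorem parentMat_transpose_mul_diagonal_mul {R : Type*} [NonAssocSemiring R]
    (g : Fin (n + 1) → R) :
    (T.parentMat R)ᵀ * diagonal g * T.parentMat R =
      diagonal fun v => ∑ w ∈ T.children v, g w := by
  ext i j
  rw [mul_apply]
  simp only [mul_diagonal, transpose_apply, parentMat, of_apply, diagonal_apply]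
  rcases eq_or_ne i j with rfl | hij
  · simp only [if_true, children, Finset.sum_filter]
    refine Finset.sum_congr rfl fun k _ => ?_
    split_ifs <;> simp
  · refine (Finset.sum_eq_zero fun k _ => ?_).trans (if_neg hij).symm
    by_cases hki : T.parent k = i
    · simp [hki, hij]
    · simp [hki]

theorem det_one_sub_diagonal_mul_parentMat {R : Type*} [CommRing R] (g : Fin (n + 1) → R) :
    (1 - diagonal g * T.parentMat R).det = 1 := by
  rw [det_of_isLowerTriangular]
  · simp [parentMat]
  · intro i j (hij : i < j)
    have : T.parent i ≠ j := ((T.parent_le i).trans_lt hij).ne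
    simp [parentMat, hij.ne, this]

theorem scalar_sub_adjMat_eq {K : Type} [Field K] (x : K) (G : Fin (n + 1) → K)
    (hG0 : ∀ v, G v ≠ 0) (hG : ∀ v, G v = x - ∑ w ∈ T.children v, (G w)⁻¹) :
    scalar _ x - T.adjMat K =
      (1 - diagonal G⁻¹ * T.parentMat K)ᵀ * diagonal G * (1 - diagonal G⁻¹ * T.parentMat K) := by
  set E := T.parentMat K
  have hinv_mul : diagonal G⁻¹ * diagonal G = 1 := by
    rw [diagonal_mul_diagonal, ← diagonal_one]
    exact congrArg diagonal (funext fun v => inv_mul_cancel₀ (hG0 v))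
  have hmul_inv : diagonal G * diagonal G⁻¹ = 1 := by
    rw [diagonal_mul_diagonal, ← diagonal_one]
    exact congrArg diagonal (funext fun v => mul_inv_cancel₀ (hG0 v))
  have hx : scalar _ x = diagonal G + Eᵀ * diagonal G⁻¹ * E := by
    rw [T.parentMat_transpose_mul_diagonal_mul, diagonal_add, scalar_apply]
    exact congrArg diagonal (funext fun v => by simp [hG v])
  rw [transpose_sub, transpose_one, transpose_mul, diagonal_transpose,
    T.adjMat_eq_parentMat_add_transpose, hx]
  calc diagonal G + Eᵀ * diagonal G⁻¹ * E - (E + Eᵀ)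
      = diagonal G - Eᵀ * (diagonal G⁻¹ * diagonal G) - (diagonal G * diagonal G⁻¹) * E
          + Eᵀ * (diagonal G⁻¹ * diagonal G) * diagonal G⁻¹ * E := by
        rw [hinv_mul, hmul_inv]
        noncomm_ring
    _ = (1 - Eᵀ * diagonal G⁻¹) * diagonal G * (1 - diagonal G⁻¹ * E) := by noncomm_ring

theorem det_scalar_sub_adjMat {K : Type} [Field K] (x : K) (G : Fin (n + 1) → K)
    (hG0 : ∀ v, G v ≠ 0) (hG : ∀ v, G v = x - ∑ w ∈ T.children v, (G w)⁻¹) :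
    (scalar _ x - T.adjMat K).det = ∏ v, G v := by
  rw [T.scalar_sub_adjMat_eq x G hG0 hG, det_mul, det_mul, det_transpose,
    det_one_sub_diagonal_mul_parentMat, det_diagonal, one_mul, mul_one]

end ParentTree

theorem stmt_4 {n : ℕ} (T : ParentTree n) (G : Fin (n + 1) → RatFunc ℚ)
    (hG : ∀ v, G v = RatFunc.X - ∑ w ∈ T.children v, (G w)⁻¹) :
    algebraMap (Polynomial ℚ) (RatFunc ℚ) (T.adjMat ℚ).charpoly = ∏ v, G v := by
  classical
  have hX : 1 < RatFunc.inftyValuation ℚ RatFunc.X := by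
    rw [RatFunc.inftyValuation.X, ← WithZero.exp_zero, WithZero.exp_lt_exp]
    exact one_pos
  have hG0 : ∀ v, G v ≠ 0 := fun v =>
    (Valuation.ne_zero_iff _).1 <| by
      rw [T.valuation_eq_of_one_lt _ hX G hG v]
      exact (zero_lt_one.trans hX).ne'
  rw [ringHom_charpoly, RatFunc.algebraMap_X, T.adjMat_map,
    T.det_scalar_sub_adjMat RatFunc.X G hG0 hG]
end

section
/- Let T be a rooted tree with integer weights β(v), and define F(v,x) ∈ ℤ(x) recursively by F(v,x) = x - β(v) - ∑_{w child of v} 1/F(w,x). Then for every vertex v, F(v,x) can be written as a quotient F₁(v,x)/F₂(v,x) of monic polynomials in ℤ[x] with deg F₁(v,x) = deg F₂(v,x) + 1. In particular F(v,x) is nonzero. -/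
open Polynomial

/-!
If `F w = p / q` with `p`, `q` monic and `deg p = deg q + 1`, then `1 / F w = q / p` has a monic
denominator of larger degree than its numerator; such fractions are closed under sums (common
denominator `q₁ q₂`), and `x - β - r / q = ((x - β) q - r) / q` again has a monic numerator of
degree `deg q + 1`. Children carry larger labels, so induction downwards from the leaves
finishes the proof.
-/

namespace Polynomial

variable {R K : Type*} [CommRing R] [Field K] (f : R →+* K)

noncomputable def toRatFunc : R[X] →+* RatFunc K :=
  (algebraMap K[X] (RatFunc K)).comp (mapRingHom f)

theorem toRatFunc_ne_zero_of_monic {p : R[X]} (hp : p.Monic) : toRatFunc f p ≠ 0 :=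
  RatFunc.algebraMap_ne_zero (hp.map f).ne_zero

theorem toRatFunc_X : toRatFunc f X = RatFunc.X := by
  simp [toRatFunc, RatFunc.algebraMap_X]

def IsProperMonicFraction (g : RatFunc K) : Prop :=
  ∃ r q : R[X], q.Monic ∧ r.degree < q.degree ∧ g = toRatFunc f r / toRatFunc f q

def IsMonicFractionDegSucc (g : RatFunc K) : Prop :=
  ∃ p q : R[X], p.Monic ∧ q.Monic ∧ p.natDegree = q.natDegree + 1 ∧
    g = toRatFunc f p / toRatFunc f q

variable {f}

theorem IsMonicFractionDegSucc.ne_zero {g : RatFunc K} (hg : IsMonicFractionDegSucc f g) :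
    g ≠ 0 := by
  obtain ⟨p, q, hp, hq, -, rfl⟩ := hg
  exact div_ne_zero (toRatFunc_ne_zero_of_monic f hp) (toRatFunc_ne_zero_of_monic f hq)

theorem IsMonicFractionDegSucc.inv {g : RatFunc K} (hg : IsMonicFractionDegSucc f g) :
    IsProperMonicFraction f g⁻¹ := by
  obtain ⟨p, q, hp, hq, hdeg, rfl⟩ := hg
  exact ⟨q, p, hp, degree_lt_degree (by omega), inv_div _ _⟩

variable [Nontrivial R]

theorem isProperMonicFraction_zero : IsProperMonicFraction f 0 :=
  ⟨0, 1, monic_one, by simp, by simp⟩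

theorem IsProperMonicFraction.add {g h : RatFunc K} (hg : IsProperMonicFraction f g)
    (hh : IsProperMonicFraction f h) : IsProperMonicFraction f (g + h) := by
  obtain ⟨r₁, q₁, hq₁, hr₁, rfl⟩ := hg
  obtain ⟨r₂, q₂, hq₂, hr₂, rfl⟩ := hh
  have hq₁_ne : q₁.degree ≠ ⊥ := degree_ne_bot.mpr hq₁.ne_zero
  have hq₂_ne : q₂.degree ≠ ⊥ := degree_ne_bot.mpr hq₂.ne_zero
  refine ⟨r₁ * q₂ + r₂ * q₁, q₁ * q₂, hq₁.mul hq₂, ?_, ?_⟩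
  · refine (degree_add_le _ _).trans_lt (max_lt ?_ ?_)
    · rw [hq₂.degree_mul, hq₂.degree_mul]
      exact WithBot.add_lt_add_right hq₂_ne hr₁
    · rw [hq₁.degree_mul, hq₂.degree_mul, add_comm q₁.degree]
      exact WithBot.add_lt_add_right hq₁_ne hr₂
  · rw [div_add_div _ _ (toRatFunc_ne_zero_of_monic f hq₁) (toRatFunc_ne_zero_of_monic f hq₂)]
    simp only [map_add, map_mul, mul_comm (toRatFunc f q₁)]

theorem IsProperMonicFraction.sum {ι : Type*} {s : Finset ι} {g : ι → RatFunc K}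
    (hg : ∀ i ∈ s, IsProperMonicFraction f (g i)) :
    IsProperMonicFraction f (∑ i ∈ s, g i) :=
  Finset.sum_induction g _ (fun _ _ => .add) isProperMonicFraction_zero hg

theorem IsProperMonicFraction.X_sub_C_sub {g : RatFunc K} (hg : IsProperMonicFraction f g)
    (b : R) : IsMonicFractionDegSucc f (RatFunc.X - toRatFunc f (C b) - g) := by
  obtain ⟨r, q, hq, hr, rfl⟩ := hg
  have hlead : ((X - C b) * q).Monic := (monic_X_sub_C b).mul hq
  have hlead_deg : ((X - C b) * q).natDegree = q.natDegree + 1 := by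
    rw [(monic_X_sub_C b).natDegree_mul hq, natDegree_X_sub_C, add_comm]
  have hr_lt : r.natDegree < ((X - C b) * q).natDegree := by
    rw [hlead_deg]
    exact Nat.lt_succ_of_le (natDegree_le_natDegree hr.le)
  refine ⟨(X - C b) * q - r, q, ?_, hq, ?_, ?_⟩
  · rw [sub_eq_add_neg]
    exact hlead.add_of_left (by rw [degree_neg]; exact degree_lt_degree hr_lt)
  · rw [natDegree_sub_eq_left_of_natDegree_lt hr_lt, hlead_deg]
  · rw [map_sub, map_mul, sub_div, mul_div_cancel_right₀ _ (toRatFunc_ne_zero_of_monic f hq),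
      map_sub, toRatFunc_X]

end Polynomial

theorem ParentTree.lt_of_mem_children_s7 {n : ℕ} (T : ParentTree n) {v w : Fin (n + 1)}
    (hw : w ∈ T.children v) : v < w := by
  obtain ⟨hpw, hwv⟩ := (Finset.mem_filter.mp hw).2
  have hw0 : w ≠ 0 := by
    rintro rfl
    exact hwv (T.parent_zero ▸ hpw)
  exact hpw ▸ T.parent_lt w hw0

theorem stmt_7 {n : ℕ} (T : ParentTree n) (β : Fin (n + 1) → ℤ)
    (F : Fin (n + 1) → RatFunc ℚ)
    (hF : ∀ v, F v = RatFunc.X - (β v : RatFunc ℚ) - ∑ w ∈ T.children v, (F w)⁻¹) :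
    ∀ v, ∃ F₁ F₂ : Polynomial ℤ, F₁.Monic ∧ F₂.Monic ∧
      F₁.natDegree = F₂.natDegree + 1 ∧
      F v = algebraMap (Polynomial ℚ) (RatFunc ℚ) (F₁.map (Int.castRingHom ℚ)) /
              algebraMap (Polynomial ℚ) (RatFunc ℚ) (F₂.map (Int.castRingHom ℚ)) ∧
      F v ≠ 0 := by
  have hβ : ∀ v, (β v : RatFunc ℚ) = toRatFunc (Int.castRingHom ℚ) (C (β v)) := fun v =>
    (eq_intCast ((toRatFunc _).comp C) (β v)).symm
  have key : ∀ v, IsMonicFractionDegSucc (Int.castRingHom ℚ) (F v) := by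
    intro v
    induction v using WellFoundedGT.induction with
    | _ v ih =>
      rw [hF v, hβ v]
      exact (IsProperMonicFraction.sum fun w hw =>
        (ih w (T.lt_of_mem_children_s7 hw)).inv).X_sub_C_sub _
  intro v
  obtain ⟨p, q, hp, hq, hdeg, hpq⟩ := key v
  exact ⟨p, q, hp, hq, hdeg, hpq, (key v).ne_zero⟩
end

section
/- For the path graph on k vertices (k ≥ 1), the graph energy (sum of absolute values of the adjacency eigenvalues) equals 2·(cot(π/(2k+2)) - 1) if k is odd, and 2·(csc(π/(2k+2)) - 1) if k is even. -/
/-!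
For `θ = (h + 1)π/(k + 1)` with `h < k`, the vector `(sin θ, sin 2θ, …, sin kθ)` is an
eigenvector of the path with eigenvalue `2 cos θ`, because `sin (j - 1)θ + sin (j + 1)θ =
2 cos θ sin jθ` and `sin 0 = sin (k + 1)θ = 0` take care of the two ends. These `k` eigenvalues
are distinct, so they are all the roots of the characteristic polynomial. Since
`cos (π - x) = -cos x`, the eigenvalues come in pairs `±λ` (with a zero in the middle when `k` is
odd), so the energy is twice the sum of the positive ones, `2 ∑_{1 ≤ j ≤ k/2} 2 cos (2jα)` with
`α = π/(2k + 2)`. This Dirichlet-kernel sum telescopes to `sin ((2⌊k/2⌋ + 1)α) / sin α - 1`,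
and `(2⌊k/2⌋ + 1)α` is `π/2` for even `k` and `π/2 - α` for odd `k`.
-/

open Polynomial Real

/-- Adjacency matrix of the path graph on `k` vertices. -/
def pathAdj (k : ℕ) : Matrix (Fin k) (Fin k) ℝ :=
  Matrix.of fun i j => if i.val + 1 = j.val ∨ j.val + 1 = i.val then 1 else 0

/-- The graph energy: sum of absolute values of the adjacency eigenvalues
(roots of the characteristic polynomial, with multiplicity). -/
noncomputable def pathEnergy (k : ℕ) : ℝ :=
  (((pathAdj k).charpoly).roots.map (fun x => |x|)).sum

open Finset Matrix

theorem Matrix.isRoot_charpoly_of_mulVec_eq_smul {n R : Type*} [Fintype n] [DecidableEq n]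
    [CommRing R] [IsDomain R] {M : Matrix n n R} {v : n → R} {μ : R} (hv : v ≠ 0)
    (hMv : M *ᵥ v = μ • v) : M.charpoly.IsRoot μ := by
  rw [IsRoot, eval_charpoly, ← exists_mulVec_eq_zero_iff]
  exact ⟨v, hv, by rw [sub_mulVec, hMv, scalar_apply, diagonal_const_mulVec, sub_self]⟩

theorem pathAdj_mulVec_apply {k : ℕ} {w : ℕ → ℝ} (h0 : w 0 = 0) (hk : w (k + 1) = 0)
    (i : Fin k) : (pathAdj k *ᵥ fun j => w (j + 1)) i = w i + w (i + 2) := by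
  have hsplit : ∀ j : Fin k, pathAdj k i j * w (j + 1) =
      (if j.val = i + 1 then w (j + 1) else 0) + (if j.val + 1 = i then w (j + 1) else 0) := by
    intro j
    simp only [pathAdj, Matrix.of_apply]
    split_ifs <;> first | omega | ring
  simp only [Matrix.mulVec, dotProduct, hsplit, sum_add_distrib]
  rw [Fin.sum_univ_eq_sum_range (fun j => if j = i + 1 then w (j + 1) else 0),
    Fin.sum_univ_eq_sum_range (fun j => if j + 1 = i.val then w (j + 1) else 0),
    sum_ite_eq' (range k) (i + 1) (fun j => w (j + 1)), add_comm]
  obtain ⟨i, hi⟩ := i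
  congr 1
  · cases i with
    | zero => simp [h0]
    | succ m => simp [sum_ite_eq', show m < k by omega]
  · split_ifs with h
    · rfl
    · rw [show i + 2 = k + 1 by simp at h; omega, hk]

theorem pathAdj_isRoot_charpoly {k h : ℕ} (hh : h < k) :
    (pathAdj k).charpoly.IsRoot (2 * cos ((h + 1) * π / (k + 1))) := by
  set θ := (h + 1) * π / (k + 1)
  have hθ : 0 < θ ∧ θ < π :=
    ⟨by positivity, by rw [div_lt_iff₀ (by positivity), mul_comm]; gcongr⟩
  have hk : sin (((k + 1 : ℕ) : ℝ) * θ) = 0 := by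
    rw [show ((k + 1 : ℕ) : ℝ) * θ = (h + 1 : ℕ) * π by
      push_cast; simp only [θ]; field_simp]
    exact sin_nat_mul_pi _
  refine Matrix.isRoot_charpoly_of_mulVec_eq_smul
    (v := fun i : Fin k => sin (((i + 1 : ℕ) : ℝ) * θ))
    (fun hv => (sin_pos_of_pos_of_lt_pi hθ.1 hθ.2).ne' ?_) ?_
  · simpa using congr_fun hv ⟨0, by omega⟩
  · ext i
    rw [pathAdj_mulVec_apply (w := fun j : ℕ => sin (j * θ)) (by simp) hk]
    simp only [Pi.smul_apply, smul_eq_mul]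
    push_cast
    rw [show ((i : ℝ) + 2) * θ = (i + 1) * θ + θ by ring,
      show (i : ℝ) * θ = (i + 1) * θ - θ by ring, sin_add, sin_sub]
    ring

theorem pathAdj_charpoly_roots (k : ℕ) :
    (pathAdj k).charpoly.roots =
      (Multiset.range k).map fun h : ℕ => 2 * cos ((h + 1) * π / (k + 1)) := by
  have hnodup : ((Multiset.range k).map fun h : ℕ => 2 * cos ((h + 1) * π / (k + 1))).Nodup := by
    simpa [Multiset.map_map, Function.comp_def] using
      (Chebyshev.roots_U_real_nodup k).map (mul_right_injective₀ two_ne_zero)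
  refine roots_eq_of_natDegree_le_card_of_ne_zero (S := ⟨_, hnodup⟩) ?_ ?_
    (charpoly_monic _).ne_zero
  · simp only [Finset.mem_mk, Multiset.mem_map, Multiset.mem_range]
    rintro _ ⟨h, hh, rfl⟩
    exact pathAdj_isRoot_charpoly hh
  · simp [charpoly_natDegree_eq_dim]

theorem pathEnergy_eq_sum_abs_cos (k : ℕ) :
    pathEnergy k = ∑ h ∈ range k, |2 * cos ((h + 1) * π / (k + 1))| := by
  rw [pathEnergy, pathAdj_charpoly_roots, Multiset.map_map]
  rfl

theorem sum_range_abs_eq_two_mul_sum_range_half {f : ℕ → ℝ} {k : ℕ}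
    (hanti : ∀ h < k, f (k - 1 - h) = -f h) (hpos : ∀ h < k / 2, 0 ≤ f h) :
    ∑ h ∈ range k, |f h| = 2 * ∑ h ∈ range (k / 2), f h := by
  have hhalf : ∑ h ∈ range (k / 2), |f h| = ∑ h ∈ range (k / 2), f h :=
    sum_congr rfl fun h hh => abs_of_nonneg (hpos h (mem_range.mp hh))
  have hupper : ∀ c, k = c + k / 2 →
      ∑ h ∈ range (k / 2), |f (c + h)| = ∑ h ∈ range (k / 2), |f h| := by
    intro c hc
    rw [← sum_range_reflect]
    refine sum_congr rfl fun h hh => ?_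
    rw [mem_range] at hh
    rw [show c + (k / 2 - 1 - h) = k - 1 - h by omega, hanti h (by omega), abs_neg]
  obtain ⟨n, rfl | rfl⟩ := Nat.even_or_odd' k
  · rw [show 2 * n / 2 = n by omega] at hhalf hupper ⊢
    rw [two_mul n, sum_range_add, hupper n (by omega), hhalf, two_mul]
  · have hmid : f n = 0 := by
      have := hanti n (by omega)
      rw [show 2 * n + 1 - 1 - n = n by omega] at this
      linarith
    rw [show (2 * n + 1) / 2 = n by omega] at hhalf hupper ⊢
    rw [show 2 * n + 1 = (n + 1) + n by omega, sum_range_add, sum_range_succ, hmid, abs_zero,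
      add_zero, hupper (n + 1) (by omega), hhalf, two_mul]

theorem sin_mul_sum_range_two_mul_cos (α : ℝ) (n : ℕ) :
    sin α * ∑ h ∈ range n, 2 * cos ((2 * h + 2) * α) = sin ((2 * n + 1) * α) - sin α := by
  induction n with
  | zero => simp
  | succ n ih =>
    have hstep : sin α * (2 * cos ((2 * n + 2) * α)) =
        sin ((2 * (n + 1 : ℕ) + 1) * α) - sin ((2 * n + 1) * α) := by
      rw [sin_sub_sin]
      push_cast
      ring_nf
    rw [sum_range_succ, mul_add, ih, hstep]
    ring

theorem pathEnergy_eq_sin_div_sin (k : ℕ) :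
    pathEnergy k =
      2 * (sin ((2 * (k / 2 : ℕ) + 1) * (π / (2 * k + 2))) / sin (π / (2 * k + 2)) - 1) := by
  set α := π / (2 * k + 2)
  have hangle : ∀ h : ℕ, (h + 1) * π / (k + 1) = (2 * h + 2) * α := fun h => by
    simp only [α]; field_simp
  have hsinα : 0 < sin α := sin_pos_of_pos_of_lt_pi (by positivity)
    (div_lt_self pi_pos (by linarith [(Nat.cast_nonneg k : (0 : ℝ) ≤ k)]))
  rw [pathEnergy_eq_sum_abs_cos,
    sum_range_abs_eq_two_mul_sum_range_half (f := fun h : ℕ => 2 * cos ((h + 1) * π / (k + 1)))]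
  · have htel := sin_mul_sum_range_two_mul_cos α (k / 2)
    simp only [hangle]
    congr 1
    rw [eq_sub_iff_add_eq, eq_div_iff hsinα.ne']
    linarith
  · intro h hh
    rw [Nat.cast_sub (by omega), Nat.cast_sub (by omega), Nat.cast_one,
      show ((k - 1 - h + 1) * π / (k + 1) : ℝ) = π - (h + 1) * π / (k + 1) by field_simp; ring,
      cos_pi_sub, mul_neg]
  · intro h hh
    have : 2 * ((h : ℝ) + 1) ≤ k := by exact_mod_cast (by omega : 2 * (h + 1) ≤ k)
    refine mul_nonneg zero_le_two (cos_nonneg_of_mem_Icc ⟨?_, ?_⟩)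
    · have : 0 ≤ (h + 1) * π / (k + 1) := by positivity
      linarith [pi_pos]
    · rw [div_le_iff₀ (by positivity)]
      nlinarith [pi_pos]

theorem stmt_13_general (k : ℕ) :
    pathEnergy k = if Odd k then 2 * (Real.cot (Real.pi / (2 * k + 2)) - 1)
      else 2 * ((Real.sin (Real.pi / (2 * k + 2)))⁻¹ - 1) := by
  rw [pathEnergy_eq_sin_div_sin]
  obtain ⟨n, rfl | rfl⟩ := Nat.even_or_odd' k
  · have hangle :
        (2 * ((2 * n / 2 : ℕ) : ℝ) + 1) * (π / (2 * (2 * n : ℕ) + 2)) = π / 2 := by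
      rw [show 2 * n / 2 = n by omega]
      push_cast
      field_simp
    rw [if_neg (Nat.not_odd_iff_even.mpr (even_two_mul n)), hangle, sin_pi_div_two, one_div]
  · have hangle : (2 * (((2 * n + 1) / 2 : ℕ) : ℝ) + 1) * (π / (2 * (2 * n + 1 : ℕ) + 2)) =
        π / 2 - π / (2 * (2 * n + 1 : ℕ) + 2) := by
      rw [show (2 * n + 1) / 2 = n by omega]
      push_cast
      field_simp
      ring
    rw [if_pos (odd_two_mul_add_one n), hangle, sin_pi_div_two_sub, cot_eq_cos_div_sin]

theorem stmt_13 (k : ℕ) (hk : 1 ≤ k) :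
    pathEnergy k = if Odd k then 2 * (Real.cot (Real.pi / (2 * k + 2)) - 1)
      else 2 * ((Real.sin (Real.pi / (2 * k + 2)))⁻¹ - 1) :=
  stmt_13_general k
end

section
/- Let Ψ_j(a) denote the sum of absolute values of the roots of the Dickson polynomial E_j(x,a) for a > 0. Then for every j ≥ 1, Ψ_{j+1}(a) - Ψ_j(a) = f_j·√a, where f_j = 2·csc(π/(2j+4)) - 2·cot(π/(2j+2)) if j is odd and f_j = 2·cot(π/(2j+4)) - 2·csc(π/(2j+2)) if j is even. -/
/-!
With `n = j + 1`, `Ψ_j(a) = 2√a · (∑_{h<n} |cos (hπ/n)| - 1)`. The sign of `cos (hπ/n)` changes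
once, at `h ≈ n/2`; on each side the sum of cosines telescopes through
`2 sin (δ/2) cos (hδ) = sin ((h + ½)δ) - sin ((h - ½)δ)`, giving
`∑_{h<n} |cos (hπ/n)| = cot (π/2n)` for even `n` and `csc (π/2n)` for odd `n`.
Since `j + 1` and `j + 2` have opposite parities, the difference `Ψ_{j+1} - Ψ_j` is one cosecant
and one cotangent.
-/

open Real

/-- `PsiE j a` : sum of absolute values of the roots of the Dickson polynomial
of the second kind `E_j(x,a)`, namely `2√a·cos(hπ/(j+1))`, `h = 1,…,j`. -/
noncomputable def PsiE (j : ℕ) (a : ℝ) : ℝ :=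
  ∑ h ∈ Finset.Icc 1 j, |2 * Real.sqrt a * Real.cos (h * Real.pi / (j + 1))|

open Finset

theorem sum_range_cos_mul_two_sin_half (δ : ℝ) (n : ℕ) :
    (∑ h ∈ range n, cos (h * δ)) * (2 * sin (δ / 2)) = sin ((n - 1 / 2) * δ) + sin (δ / 2) := by
  let g : ℕ → ℝ := fun k => sin ((k - 1 / 2) * δ)
  have step (h : ℕ) : cos (h * δ) * (2 * sin (δ / 2)) = g (h + 1) - g h := by
    simp only [g, sin_sub_sin, Nat.cast_add, Nat.cast_one]
    ring_nf
  calc (∑ h ∈ range n, cos (h * δ)) * (2 * sin (δ / 2))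
      = ∑ h ∈ range n, (g (h + 1) - g h) := by rw [sum_mul]; exact sum_congr rfl fun h _ => step h
    _ = g n - g 0 := sum_range_sub g n
    _ = sin ((n - 1 / 2) * δ) + sin (δ / 2) := by
      simp only [g, CharP.cast_eq_zero]
      rw [show ((0 : ℝ) - 1 / 2) * δ = -(δ / 2) by ring, sin_neg, sub_neg_eq_add]

/-- The bounds on `m` say that `cos (hπ/n)` is nonnegative for `h < m` and nonpositive for
`m ≤ h < n`. -/
theorem sum_range_abs_cos_mul_sin (n m : ℕ) (hm : n ≤ 2 * m) (hm' : 2 * m ≤ n + 2) :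
    (∑ h ∈ range n, |cos (h * π / n)|) * sin (π / (2 * n)) = sin ((2 * m - 1) * π / (2 * n)) := by
  rcases Nat.eq_zero_or_pos n with rfl | hn
  · simp
  have hn' : (0 : ℝ) < n := by exact_mod_cast hn
  have hmn : m ≤ n := by omega
  have abs_split : ∑ h ∈ range n, |cos (h * π / n)| =
      ∑ h ∈ range m, cos (h * (π / n)) - ∑ h ∈ Ico m n, cos (h * (π / n)) := by
    rw [← sum_range_add_sum_Ico _ hmn, sub_eq_add_neg, ← sum_neg_distrib]
    congr 1
    · refine sum_congr rfl fun h hh => ?_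
      have : (2 * h : ℝ) ≤ n := by exact_mod_cast (by grind : 2 * h ≤ n)
      rw [abs_of_nonneg, mul_div_assoc]
      apply cos_nonneg_of_mem_Icc
      constructor
      · have : 0 ≤ (h : ℝ) * π / n := by positivity
        linarith [pi_pos]
      · rw [div_le_div_iff₀ hn' two_pos]; nlinarith [pi_pos]
    · refine sum_congr rfl fun h hh => ?_
      have : (n : ℝ) ≤ 2 * h := by exact_mod_cast (by grind : n ≤ 2 * h)
      have : (h : ℝ) ≤ n := by exact_mod_cast (by grind : h ≤ n)
      rw [abs_of_nonpos, mul_div_assoc]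
      apply cos_nonpos_of_pi_div_two_le_of_le
      · rw [div_le_div_iff₀ two_pos hn']; nlinarith [pi_pos]
      · rw [div_le_iff₀ hn']; nlinarith [pi_pos]
  have hm_tel := sum_range_cos_mul_two_sin_half (π / n) m
  have hn_tel := sum_range_cos_mul_two_sin_half (π / n) n
  rw [show ((n : ℝ) - 1 / 2) * (π / n) = π - π / n / 2 by field_simp, sin_pi_sub] at hn_tel
  rw [abs_split, sum_Ico_eq_sub _ hmn, show π / (2 * n) = π / n / 2 by field_simp,
    show (2 * m - 1) * π / (2 * n) = (m - 1 / 2) * (π / n) by field_simp]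
  linear_combination hm_tel - hn_tel / 2

theorem sin_pi_div_two_mul_pos {n : ℕ} (hn : n ≠ 0) : 0 < sin (π / (2 * n)) := by
  have hn' : (1 : ℝ) ≤ n := by exact_mod_cast Nat.one_le_iff_ne_zero.2 hn
  apply sin_pos_of_pos_of_lt_pi (by positivity)
  rw [div_lt_iff₀ (by positivity)]
  nlinarith [pi_pos]

theorem sum_range_abs_cos_of_even {n : ℕ} (hn : Even n) (hn0 : n ≠ 0) :
    ∑ h ∈ range n, |cos (h * π / n)| = cot (π / (2 * n)) := by
  obtain ⟨m, rfl⟩ := hn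
  have key := sum_range_abs_cos_mul_sin (m + m) m (by omega) (by omega)
  have hm : (m : ℝ) ≠ 0 := by exact_mod_cast (by omega : m ≠ 0)
  rw [show (2 * m - 1) * π / (2 * ((m + m : ℕ) : ℝ)) = π / 2 - π / (2 * ((m + m : ℕ) : ℝ)) by
    push_cast; field_simp; ring, sin_pi_div_two_sub] at key
  rw [cot_eq_cos_div_sin, ← key, mul_div_cancel_right₀ _ (sin_pi_div_two_mul_pos hn0).ne']

theorem sum_range_abs_cos_of_odd {n : ℕ} (hn : Odd n) :
    ∑ h ∈ range n, |cos (h * π / n)| = (sin (π / (2 * n)))⁻¹ := by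
  obtain ⟨m, rfl⟩ := hn
  have key := sum_range_abs_cos_mul_sin (2 * m + 1) (m + 1) (by omega) (by omega)
  rw [show (2 * ((m + 1 : ℕ) : ℝ) - 1) * π / (2 * ((2 * m + 1 : ℕ) : ℝ)) = π / 2 by
    push_cast; field_simp; ring, sin_pi_div_two] at key
  exact eq_inv_of_mul_eq_one_left key

theorem PsiE_eq_two_mul_sqrt_mul (j : ℕ) (a : ℝ) :
    PsiE j a = 2 * √a * (∑ h ∈ range (j + 1), |cos (h * π / (j + 1 : ℕ))| - 1) := by
  have h2a : 0 ≤ 2 * √a := by positivity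
  rw [PsiE, sum_range_succ', ← Ico_add_one_right_eq_Icc, sum_Ico_eq_sum_range,
    add_tsub_cancel_right, mul_sub, mul_add, mul_sum]
  simp only [abs_mul, abs_of_nonneg h2a]
  push_cast
  simp only [zero_mul, zero_div, cos_zero, abs_one, mul_one, add_sub_cancel_right, add_comm (1 : ℝ)]

theorem stmt_15_general (a : ℝ) (j : ℕ) :
    PsiE (j + 1) a - PsiE j a =
      (if Odd j then
          2 * (Real.sin (Real.pi / (2 * j + 4)))⁻¹ - 2 * Real.cot (Real.pi / (2 * j + 2))
        else
          2 * Real.cot (Real.pi / (2 * j + 4)) - 2 * (Real.sin (Real.pi / (2 * j + 2)))⁻¹)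
        * Real.sqrt a := by
  rw [PsiE_eq_two_mul_sqrt_mul, PsiE_eq_two_mul_sqrt_mul]
  rcases Nat.even_or_odd j with hj | hj
  · rw [if_neg (Nat.not_odd_iff_even.2 hj),
      sum_range_abs_cos_of_even (by simpa [parity_simps]) (by omega),
      sum_range_abs_cos_of_odd (by simpa [parity_simps])]
    push_cast
    ring_nf
  · rw [if_pos hj, sum_range_abs_cos_of_odd (by simpa [parity_simps]),
      sum_range_abs_cos_of_even (by simpa [parity_simps]) (by omega)]
    push_cast
    ring_nf

theorem stmt_15 (a : ℝ) (ha : 0 < a) (j : ℕ) (hj : 1 ≤ j) :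
    PsiE (j + 1) a - PsiE j a =
      (if Odd j then
          2 * (Real.sin (Real.pi / (2 * j + 4)))⁻¹ - 2 * Real.cot (Real.pi / (2 * j + 2))
        else
          2 * Real.cot (Real.pi / (2 * j + 4)) - 2 * (Real.sin (Real.pi / (2 * j + 2)))⁻¹)
        * Real.sqrt a :=
  stmt_15_general a j
end
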